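/- arXiv:math/0211089 — 6 statements merged into one kernel-verified Lean document; each statement's English description precedes it below -/
import Mathlib

section
/- If A is a self-adjoint linear map on a finite-dimensional real vector space with a non-degenerate symmetric bilinear form, then for each complex eigenvalue λ the restriction of the bilinear form to the generalized eigenspace E_λ + E_{conj(λ)} is non-degenerate. -/
/-!
`E_λ = E_{conj λ}` is the kernel of `q(A)^m` for the real quadratic `q(A) = A² - 2 Re λ A + |λ|²`.
Since `q(A)` is `B`-self-adjoint, so are its powers, and the range of a `B`-self-adjoint map is
`B`-orthogonal to its kernel. By Fitting's lemma `V = ker q(A)^n ⊔ range q(A)^n` for large `n`,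
and the kernels stabilise by `n = m`; so a vector of `E_λ` orthogonal to `E_λ` is orthogonal to
all of `V`, hence zero.
-/

/-- The generalized eigenspace `E_λ = ker((A - λI)^m (A - conj(λ)I)^m)`, realized as the kernel
of the `m`-th power of the real operator `A² - 2Re(λ)A + |λ|²·Id`, where `m = dim V`. -/
noncomputable def genEig {V : Type*} [AddCommGroup V] [Module ℝ V]
    (A : Module.End ℝ V) (lam : ℂ) : Submodule ℝ V :=
  LinearMap.ker ((A * A - (2 * lam.re) • A +
    (lam.re ^ 2 + lam.im ^ 2) • (1 : Module.End ℝ V)) ^ Module.finrank ℝ V)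

open LinearMap

theorem LinearMap.IsAdjointPair.pow {R M : Type*} [CommSemiring R] [AddCommMonoid M]
    [Module R M] {B : LinearMap.BilinForm R M} {f g : Module.End R M} (h : IsAdjointPair B B f g) :
    ∀ n : ℕ, IsAdjointPair B B ⇑(f ^ n) ⇑(g ^ n)
  | 0 => isAdjointPair_one
  | n + 1 => by
    rw [pow_succ', pow_succ]
    exact h.mul (h.pow n)

theorem LinearMap.IsAdjointPair.eq_zero_of_mem_ker_of_forall_mem_ker
    {R M : Type*} [CommSemiring R] [AddCommMonoid M] [Module R M] {B : LinearMap.BilinForm R M}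
    (hB : B.SeparatingLeft) {f : Module.End R M} (hf : IsAdjointPair B B f f)
    (hfc : Codisjoint (ker f) (range f)) {x : M} (hx : x ∈ ker f)
    (hxo : ∀ y ∈ ker f, B x y = 0) : x = 0 := by
  refine hB x fun z ↦ ?_
  obtain ⟨y, hy, _, ⟨w, rfl⟩, rfl⟩ := Submodule.mem_sup.mp (hfc.eq_top ▸ Submodule.mem_top : z ∈ _)
  have hxw : B x (f w) = 0 := by rw [← hf, mem_ker.mp hx, map_zero, zero_apply]
  rw [map_add, hxo y hy, hxw, add_zero]

theorem genEig_conj {V : Type*} [AddCommGroup V] [Module ℝ V] (A : Module.End ℝ V) (lam : ℂ) :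
    genEig A (starRingEnd ℂ lam) = genEig A lam := by
  simp [genEig]

theorem genEig_eq_ker_pow_of_finrank_le {V : Type*} [AddCommGroup V] [Module ℝ V]
    [FiniteDimensional ℝ V] (A : Module.End ℝ V) (lam : ℂ) {n : ℕ}
    (hn : Module.finrank ℝ V ≤ n) :
    genEig A lam = ker ((A * A - (2 * lam.re) • A + (lam.re ^ 2 + lam.im ^ 2) • 1) ^ n) :=
  (Module.End.ker_pow_eq_ker_pow_finrank_of_le hn).symm

theorem stmt1_general {V : Type*} [AddCommGroup V] [Module ℝ V] [FiniteDimensional ℝ V]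
    (B : LinearMap.BilinForm ℝ V)
    (hnd : B.Nondegenerate)
    (A : Module.End ℝ V) (hA : ∀ x y, B (A x) y = B x (A y))
    (lam : ℂ) :
    ∀ x ∈ genEig A lam ⊔ genEig A (starRingEnd ℂ lam),
      (∀ y ∈ genEig A lam ⊔ genEig A (starRingEnd ℂ lam), B x y = 0) → x = 0 := by
  rw [genEig_conj, sup_idem]
  set q : Module.End ℝ V := A * A - (2 * lam.re) • A + (lam.re ^ 2 + lam.im ^ 2) • 1
  have hA' : IsAdjointPair B B A A := hA
  have hq : IsAdjointPair B B q q :=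
    ((hA'.mul hA').sub (hA'.smul _)).add (isAdjointPair_one.smul _)
  obtain ⟨n, hfit, hn⟩ := (q.eventually_codisjoint_ker_pow_range_pow.and
    (Filter.eventually_ge_atTop (Module.finrank ℝ V))).exists
  rw [genEig_eq_ker_pow_of_finrank_le A lam hn]
  exact fun x hx hxo ↦ (hq.pow n).eq_zero_of_mem_ker_of_forall_mem_ker hnd.1 hfit hx hxo

theorem stmt1 {V : Type*} [AddCommGroup V] [Module ℝ V] [FiniteDimensional ℝ V]
    (B : LinearMap.BilinForm ℝ V) (hsymm : ∀ x y, B x y = B y x)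
    (hnd : B.Nondegenerate)
    (A : Module.End ℝ V) (hA : ∀ x y, B (A x) y = B x (A y))
    (lam : ℂ) (hlam : genEig A lam ≠ ⊥) :
    ∀ x ∈ genEig A lam ⊔ genEig A (starRingEnd ℂ lam),
      (∀ y ∈ genEig A lam ⊔ genEig A (starRingEnd ℂ lam), B x y = 0) → x = 0 :=
  stmt1_general B hnd A hA lam
end

section
/- Let A be a self-adjoint linear map on a real vector space V with a non-degenerate symmetric bilinear form of signature (p,q). If λ is a non-real complex eigenvalue of A, then the restriction of the bilinear form to the (real) generalized eigenspace E_λ has signature (p_λ, q_λ) with p_λ = q_λ. -/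
/-!
Write `λ = a + bi` and `Q(T) = (T - a)² + b²`. Since `A` is self-adjoint so is `Q(A)`, and the
Fitting decomposition `V = ker Q(A)ᵐ ⊕ range Q(A)ᵐ` is `B`-orthogonal; hence `B` is nondegenerate
on `E_λ = ker Q(A)ᵐ`. On `E_λ`, let `s` be the semisimple part of `A` (Jordan–Chevalley). It is a
polynomial in `A`, so self-adjoint, and `Q(s)` is semisimple and nilpotent, so `Q(s) = 0`. Thus
`J = (s - a)/b` is a self-adjoint complex structure on `E_λ`. Now `H(x, y) = B(x, y) - i B(Jx, y)`
is a nondegenerate symmetric `ℂ`-bilinear form; for an `H`-orthonormal complex basis `(wᵢ)`, the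
real basis `(Jwᵢ, wᵢ)` diagonalizes `B` with entries `-1` and `+1` in equal numbers.
-/

/-- A symmetric bilinear form has signature `(p,q)` (p minus signs, q plus signs) if there is a
basis which is orthogonal, with the form taking value `-1` on the first `p` basis vectors and
`+1` on the last `q` basis vectors. -/
def HasSignature {V : Type*} [AddCommGroup V] [Module ℝ V]
    (B : LinearMap.BilinForm ℝ V) (p q : ℕ) : Prop :=
  ∃ e : Module.Basis (Fin p ⊕ Fin q) ℝ V,
    (∀ i j, i ≠ j → B (e i) (e j) = 0) ∧
    (∀ i : Fin p, B (e (Sum.inl i)) (e (Sum.inl i)) = -1) ∧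
    (∀ i : Fin q, B (e (Sum.inr i)) (e (Sum.inr i)) = 1)

open Module LinearMap Polynomial Complex

theorem Commute.apply_mem_ker {R M : Type*} [CommSemiring R] [AddCommMonoid M] [Module R M]
    {f g : Module.End R M} (h : Commute f g) {x : M} (hx : x ∈ ker g) : f x ∈ ker g := by
  rw [mem_ker] at hx ⊢
  rw [← Module.End.mul_apply, ← h.eq, Module.End.mul_apply, hx, map_zero]

theorem LinearMap.IsSelfAdjoint.of_mem_adjoin_singleton {R M M₁ : Type*} [CommRing R]
    [AddCommGroup M] [Module R M] [AddCommGroup M₁] [Module R M₁]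
    {B : M →ₗ[R] M →ₗ[R] M₁} {T S : Module.End R M} (hT : B.IsSelfAdjoint T)
    (hS : S ∈ Algebra.adjoin R {T}) : B.IsSelfAdjoint S := by
  induction hS using Algebra.adjoin_induction with
  | mem x hx => rwa [Set.mem_singleton_iff.mp hx]
  | algebraMap r =>
    rw [Algebra.algebraMap_eq_smul_one]
    exact isAdjointPair_one.smul r
  | add x y _ _ hx hy => exact hx.add hy
  | mul x y hxT hyT hx hy =>
    have hxy : Commute x y := Algebra.commute_of_mem_adjoin_singleton_of_commute hyT
      (Algebra.commute_of_mem_adjoin_self hxT).symm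
    simpa only [LinearMap.IsSelfAdjoint, hxy.eq] using hx.mul hy

theorem Module.End.isCompl_ker_pow_finrank_range_pow_finrank {K V : Type*} [Field K]
    [AddCommGroup V] [Module K V] [FiniteDimensional K V] (f : Module.End K V) :
    IsCompl (ker (f ^ finrank K V)) (range (f ^ finrank K V)) := by
  have hdisj : Disjoint (ker (f ^ finrank K V)) (range (f ^ finrank K V)) := by
    simpa [genEigenrange_nat, genEigenspace_nat] using
      (f.generalized_eigenvec_disjoint_range_ker 0).symm
  refine ⟨hdisj, codisjoint_iff.mpr (Submodule.eq_top_of_disjoint _ _ ?_ hdisj)⟩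
  rw [add_comm]
  exact (finrank_range_add_finrank_ker _).ge

theorem Module.End.IsSemisimple.aeval_eq_zero_of_isNilpotent_sub {K V : Type*} [Field K]
    [AddCommGroup V] [Module K V] [FiniteDimensional K V] {f s : Module.End K V}
    (hs : s.IsSemisimple) (hs_mem : s ∈ Algebra.adjoin K {f}) (hfs : IsNilpotent (f - s))
    {P : K[X]} (hP : IsNilpotent (aeval f P)) : aeval s P = 0 := by
  set S := Algebra.adjoin K {f}
  set a : S := ⟨f, Algebra.self_mem_adjoin_singleton K f⟩
  set b : S := ⟨s, hs_mem⟩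
  have hval : Function.Injective S.val := Subtype.val_injective
  have hab : IsNilpotent (a - b) := by rwa [← IsNilpotent.map_iff hval]
  have ha : IsNilpotent (aeval a P) := by
    rwa [← IsNilpotent.map_iff hval, ← aeval_algHom_apply]
  have hb : IsNilpotent (aeval b P) := by
    simpa using
      (Commute.all _ _).isNilpotent_sub ha (isNilpotent_aeval_sub_of_isNilpotent_sub P hab)
  refine eq_zero_of_isNilpotent_isSemisimple ?_ (hs.aeval P)
  rwa [← IsNilpotent.map_iff hval, ← aeval_algHom_apply] at hb

theorem Complex.I_smul_I_smul {W : Type*} [AddCommGroup W] [Module ℂ W] (x : W) :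
    I • I • x = -x := by
  rw [smul_smul, I_mul_I, neg_one_smul]

theorem Complex.smul_eq_re_smul_add_im_smul_I_smul {W : Type*} [AddCommGroup W] [Module ℂ W]
    [Module ℝ W] [IsScalarTower ℝ ℂ W] (z : ℂ) (x : W) :
    z • x = z.re • x + z.im • (I • x) := by
  conv_lhs => rw [← re_add_im z]
  rw [add_smul, mul_smul, ← algebraMap_smul ℂ z.re, ← algebraMap_smul ℂ z.im]
  rfl

namespace LinearMap.BilinForm

theorem nondegenerate_restrict_ker_pow_finrank {K V : Type*} [Field K] [AddCommGroup V]
    [Module K V] [FiniteDimensional K V] {B : LinearMap.BilinForm K V} (hB : B.IsRefl)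
    (hnd : B.Nondegenerate) {T : Module.End K V} (hT : B.IsSelfAdjoint T) :
    (B.restrict (ker (T ^ finrank K V))).Nondegenerate := by
  refine B.nondegenerate_restrict_of_disjoint_orthogonal hB (Submodule.disjoint_def.mpr ?_)
  intro x hxE hxE_orth
  refine hnd.1 x fun y ↦ ?_
  obtain ⟨u, hu, _, ⟨z, rfl⟩, rfl⟩ := Submodule.mem_sup.mp
    ((T.isCompl_ker_pow_finrank_range_pow_finrank).sup_eq_top ▸ Submodule.mem_top : y ∈ _)
  have hTm : B.IsSelfAdjoint ⇑(T ^ finrank K V) :=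
    hT.of_mem_adjoin_singleton (pow_mem (Algebra.self_mem_adjoin_singleton K T) _)
  rw [map_add, hB _ _ (hxE_orth u hu), ← hTm, mem_ker.mp hxE, map_zero, zero_add,
    LinearMap.zero_apply]

theorem exists_mul_self_eq_neg_one_isSelfAdjoint {V : Type*} [AddCommGroup V] [Module ℝ V]
    [FiniteDimensional ℝ V] {B : LinearMap.BilinForm ℝ V} {T : Module.End ℝ V}
    (hT : B.IsSelfAdjoint T) {a b : ℝ} (hb : b ≠ 0)
    (hnil : IsNilpotent (T * T - (2 * a) • T + (a ^ 2 + b ^ 2) • 1)) :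
    ∃ J : Module.End ℝ V, J * J = -1 ∧ B.IsSelfAdjoint J := by
  obtain ⟨n, -, s, hs_mem, hn, hs, hTns⟩ := T.exists_isNilpotent_isSemisimple
  have haeval : ∀ f : Module.End ℝ V, aeval f (X ^ 2 - C (2 * a) * X + C (a ^ 2 + b ^ 2)) =
      f * f - (2 * a) • f + (a ^ 2 + b ^ 2) • 1 := fun f ↦ by
    simp [sq, Algebra.smul_def]
  have hQs : s * s - (2 * a) • s + (a ^ 2 + b ^ 2) • 1 = 0 := by
    rw [← haeval]
    exact hs.aeval_eq_zero_of_isNilpotent_sub hs_mem (by rwa [hTns, add_sub_cancel_right])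
      (by rwa [haeval])
  have hsq : (s - a • 1) * (s - a • 1) = -(b ^ 2 • 1 : Module.End ℝ V) := by
    rw [← sub_eq_zero, ← hQs]
    simp only [sub_mul, mul_sub, smul_mul_assoc, mul_smul_comm, one_mul, mul_one]
    module
  refine ⟨b⁻¹ • (s - a • 1), ?_,
    ((hT.of_mem_adjoin_singleton hs_mem).sub (isAdjointPair_one.smul a)).smul b⁻¹⟩
  rw [smul_mul_smul, hsq, smul_neg, smul_smul, show b⁻¹ * b⁻¹ * b ^ 2 = 1 by field_simp,
    one_smul]

theorem exists_basis_apply_eq_ite {K M : Type*} [Field K] [IsAlgClosed K] [Invertible (2 : K)]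
    [AddCommGroup M] [Module K M] [FiniteDimensional K M] {B : LinearMap.BilinForm K M}
    (hB : LinearMap.IsSymm B) (hB' : B.SeparatingLeft) :
    ∃ w : Basis (Fin (finrank K M)) K M, ∀ i j, B (w i) (w j) = if i = j then 1 else 0 := by
  obtain ⟨v, hv⟩ := B.exists_orthogonal_basis hB
  have hvv : ∀ i, B (v i) (v i) ≠ 0 := hv.not_isOrtho_basis_self_of_separatingLeft hB'
  choose c hc using fun i ↦ IsAlgClosed.exists_pow_nat_eq (B (v i) (v i))⁻¹ two_pos
  have hc0 : ∀ i, c i ≠ 0 := fun i h ↦ hvv i (by simpa [h, eq_comm] using hc i)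
  refine ⟨v.isUnitSMul fun i ↦ (hc0 i).isUnit, fun i j ↦ ?_⟩
  simp only [Basis.isUnitSMul_apply, map_smul, LinearMap.smul_apply, smul_eq_mul]
  split_ifs with hij
  · subst hij
    rw [← mul_assoc, ← sq, hc, inv_mul_cancel₀ (hvv i)]
  · rw [hv hij, mul_zero, mul_zero]

variable {W : Type*} [AddCommGroup W] [Module ℂ W] [Module ℝ W]

/-- The `ℂ`-bilinear form with real part `B`; its imaginary part is forced by `ℂ`-linearity in
the first argument, and linearity in the second is where `I` being `B`-self-adjoint enters. -/
def complexBilinForm [IsScalarTower ℝ ℂ W] (B : LinearMap.BilinForm ℝ W)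
    (hI : ∀ x y, B (I • x) y = B x (I • y)) : LinearMap.BilinForm ℂ W :=
  mk₂ ℂ (fun x y ↦ ⟨B x y, -B (I • x) y⟩)
    (fun x x' y ↦ by apply Complex.ext <;> simp [add_comm])
    (fun z x y ↦ by
      apply Complex.ext <;>
        simp [smul_eq_re_smul_add_im_smul_I_smul z x, smul_comm I (_ : ℝ), I_smul_I_smul]
      ring)
    (fun x y y' ↦ by apply Complex.ext <;> simp [add_comm])
    (fun z x y ↦ by
      apply Complex.ext <;> simp [smul_eq_re_smul_add_im_smul_I_smul z y, ← hI, I_smul_I_smul]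
      ring)

section
variable [IsScalarTower ℝ ℂ W] {B : LinearMap.BilinForm ℝ W}
  (hI : ∀ x y, B (I • x) y = B x (I • y))

@[simp]
theorem complexBilinForm_apply_re (x y : W) : (complexBilinForm B hI x y).re = B x y :=
  rfl

@[simp]
theorem complexBilinForm_apply_im (x y : W) : (complexBilinForm B hI x y).im = -B (I • x) y :=
  rfl

end

theorem apply_I_smul_I_smul {B : LinearMap.BilinForm ℝ W}
    (hI : ∀ x y, B (I • x) y = B x (I • y)) (x y : W) : B (I • x) (I • y) = -B x y := by
  rw [hI, I_smul_I_smul, map_neg]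

theorem hasSignature_of_apply_I_smul [IsScalarTower ℝ ℂ W] [FiniteDimensional ℂ W]
    {B : LinearMap.BilinForm ℝ W} (hI : ∀ x y, B (I • x) y = B x (I • y))
    (hsymm : ∀ x y, B x y = B y x) (hnd : B.Nondegenerate) : ∃ r, HasSignature B r r := by
  have hH : LinearMap.IsSymm (complexBilinForm B hI) :=
    ⟨fun x y ↦ by apply Complex.ext <;> simp [hsymm x, hI]⟩
  have hH' : (complexBilinForm B hI).SeparatingLeft :=
    fun x hx ↦ hnd.1 x fun y ↦ by simpa using congrArg re (hx y)
  have : Invertible (2 : ℂ) := invertibleOfNonzero two_ne_zero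
  obtain ⟨w, hw⟩ := exists_basis_apply_eq_ite hH hH'
  have hBw : ∀ i j, B (w i) (w j) = if i = j then 1 else 0 := fun i j ↦ by
    simpa [apply_ite re] using congrArg re (hw i j)
  have hBIw : ∀ i j, B (I • w i) (w j) = 0 := fun i j ↦ by
    simpa [apply_ite im] using congrArg im (hw i j)
  set σ : Fin 2 × Fin (finrank ℂ W) ≃ Fin (finrank ℂ W) ⊕ Fin (finrank ℂ W) :=
    ((finTwoEquiv.prodCongr (Equiv.refl _)).trans (Equiv.boolProdEquivSum _)).trans
      (Equiv.sumComm _ _)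
  set e := (basisOneI.smulTower w).reindex σ
  have hσ₀ : finTwoEquiv.symm false = 0 := rfl
  have hσ₁ : finTwoEquiv.symm true = 1 := rfl
  have he_inl : ∀ i, e (Sum.inl i) = I • w i := fun i ↦ by
    simp [e, σ, Equiv.boolProdEquivSum, hσ₁]
  have he_inr : ∀ i, e (Sum.inr i) = w i := fun i ↦ by
    simp [e, σ, Equiv.boolProdEquivSum, hσ₀]
  refine ⟨_, e, ?_, fun i ↦ ?_, fun i ↦ ?_⟩
  · rintro (i | i) (j | j) hij
    · rw [he_inl, he_inl, apply_I_smul_I_smul hI, hBw, if_neg (fun h ↦ hij (by rw [h])),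
        neg_zero]
    · rw [he_inl, he_inr, hBIw]
    · rw [he_inr, he_inl, ← hI, hBIw]
    · rw [he_inr, he_inr, hBw, if_neg (fun h ↦ hij (by rw [h]))]
  · rw [he_inl, apply_I_smul_I_smul hI, hBw, if_pos rfl]
  · rw [he_inr, hBw, if_pos rfl]

theorem hasSignature_of_mul_self_eq_neg_one {V : Type*} [AddCommGroup V] [Module ℝ V]
    [FiniteDimensional ℝ V] {B : LinearMap.BilinForm ℝ V} (hsymm : ∀ x y, B x y = B y x)
    (hnd : B.Nondegenerate) {J : Module.End ℝ V} (hJ : J * J = -1) (hJB : B.IsSelfAdjoint J) :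
    ∃ r, HasSignature B r r := by
  let : Module ℂ V := Module.compHom V (Complex.lift ⟨J, hJ⟩).toRingHom
  have hsmul : ∀ (z : ℂ) (x : V), z • x = Complex.lift ⟨J, hJ⟩ z x := fun _ _ ↦ rfl
  have : IsScalarTower ℝ ℂ V := ⟨fun r z x ↦ by simp only [hsmul, map_smul]; rfl⟩
  have : FiniteDimensional ℂ V := Module.Finite.of_restrictScalars_finite ℝ ℂ V
  have hI : ∀ x : V, I • x = J x := fun x ↦ by simp [hsmul]
  exact hasSignature_of_apply_I_smul (fun x y ↦ by rw [hI, hI]; exact hJB x y) hsymm hnd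

end LinearMap.BilinForm

theorem stmt2_general {V : Type*} [AddCommGroup V] [Module ℝ V] [FiniteDimensional ℝ V]
    (B : LinearMap.BilinForm ℝ V) (hsymm : ∀ x y, B x y = B y x)
    (hnd : B.Nondegenerate)
    (A : Module.End ℝ V) (hA : ∀ x y, B (A x) y = B x (A y))
    (lam : ℂ) (hnonreal : lam.im ≠ 0) :
    ∃ r : ℕ, HasSignature (B.restrict (genEig A lam)) r r := by
  set Q : Module.End ℝ V := A * A - (2 * lam.re) • A + (lam.re ^ 2 + lam.im ^ 2) • 1
  have hAQ : Commute A Q :=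
    (((Commute.refl A).mul_right (Commute.refl A)).sub_right
      ((Commute.refl A).smul_right _)).add_right ((Commute.one_right A).smul_right _)
  have hA' : B.IsSelfAdjoint A := hA
  have hQ : B.IsSelfAdjoint Q :=
    ((hA'.mul hA').sub (hA'.smul _)).add (isAdjointPair_one.smul _)
  have hAE : ∀ x ∈ genEig A lam, A x ∈ genEig A lam := fun _ ↦ (hAQ.pow_right _).apply_mem_ker
  have hQE : ∀ x ∈ genEig A lam, Q x ∈ genEig A lam :=
    fun _ ↦ ((Commute.refl Q).pow_right _).apply_mem_ker
  have hQ_restrict : A.restrict hAE * A.restrict hAE - (2 * lam.re) • A.restrict hAE +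
      (lam.re ^ 2 + lam.im ^ 2) • 1 = Q.restrict hQE := by
    ext; simp [Q]
  have hnil : IsNilpotent (Q.restrict hQE) :=
    ⟨finrank ℝ V, by rw [Module.End.pow_restrict]; ext x; exact mem_ker.mp x.2⟩
  obtain ⟨J, hJ, hJB⟩ :=
    BilinForm.exists_mul_self_eq_neg_one_isSelfAdjoint (B := B.restrict (genEig A lam))
      (fun x y ↦ hA x y) hnonreal (hQ_restrict ▸ hnil)
  exact BilinForm.hasSignature_of_mul_self_eq_neg_one (fun x y ↦ hsymm x y)
    (BilinForm.nondegenerate_restrict_ker_pow_finrank (fun x y h ↦ (hsymm y x).trans h) hnd hQ)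
    hJ hJB

theorem stmt2 {V : Type*} [AddCommGroup V] [Module ℝ V] [FiniteDimensional ℝ V]
    (B : LinearMap.BilinForm ℝ V) (hsymm : ∀ x y, B x y = B y x)
    (hnd : B.Nondegenerate) (p q : ℕ) (hsig : HasSignature B p q)
    (A : Module.End ℝ V) (hA : ∀ x y, B (A x) y = B x (A y))
    (lam : ℂ) (hnonreal : lam.im ≠ 0) (hlam : genEig A lam ≠ ⊥) :
    ∃ r : ℕ, HasSignature (B.restrict (genEig A lam)) r r :=
  stmt2_general B hsymm hnd A hA lam hnonreal
end

section
/- Let 𝔯 be an algebraic covariant derivative curvature tensor on V whose Szabó operator 𝔖(v) vanishes for every v ∈ V. Then 𝔯 = 0. -/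
set_option maxHeartbeats 2000000


theorem stmt5 {V : Type*} [AddCommGroup V] [Module ℝ V] [FiniteDimensional ℝ V]
    (B : LinearMap.BilinForm ℝ V) (hsymm : ∀ x y, B x y = B y x)
    (hnd : B.Nondegenerate)
    -- 𝔯, an algebraic covariant derivative curvature tensor
    (R : V →ₗ[ℝ] V →ₗ[ℝ] V →ₗ[ℝ] V →ₗ[ℝ] V →ₗ[ℝ] ℝ)
    (hpair : ∀ x y z w v, R x y z w v = R z w x y v)
    (hanti : ∀ x y z w v, R x y z w v = - R y x z w v)
    (hbianchi1 : ∀ x y z w v, R x y z w v + R y z x w v + R z x y w v = 0)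
    (hbianchi2 : ∀ x y z w v, R x y z w v + R x y w v z + R x y v z w = 0)
    -- the Szabó operator 𝔖, characterized by (𝔖(v)y, z) = 𝔯(y,v,v,z;v)
    (S : V → Module.End ℝ V)
    (hS : ∀ v y z, B (S v y) z = R y v v z v)
    -- the Szabó operator vanishes identically
    (hzero : ∀ v, S v = 0) :
    -- then 𝔯 = 0
    ∀ x y z w v, R x y z w v = 0 := by
  have h0 : ∀ p q r : V, R p q q r q = 0 := by
    intro p q r
    have h := hS q p r
    rw [hzero] at h
    simpa using h.symm
  have hM : ∀ y z a b c : V,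
      R y a b z c + R y b a z c + R y a c z b + R y c a z b + R y b c z a + R y c b z a = 0 := by
    intro y z a b c
    have h1 := h0 y (a + b + c) z
    have h2 := h0 y (a + b) z
    have h3 := h0 y (a + c) z
    have h4 := h0 y (b + c) z
    have h5 := h0 y a z
    have h6 := h0 y b z
    have h7 := h0 y c z
    simp only [map_add, LinearMap.add_apply] at h1 h2 h3 h4
    linear_combination h1 - h2 - h3 - h4 + h5 + h6 + h7
  intro x y z w v
  linear_combination
    (1/4 : ℝ) * (hbianchi2 y w x z v) +
    (1/3 : ℝ) * (hpair x z y w v) +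
    (-1/4 : ℝ) * (hpair y w v x z) +
    (1/6 : ℝ) * (hpair x v y w z) +
    (-1/4 : ℝ) * (hanti x v y w z) +
    (1/6 : ℝ) * (hbianchi1 x y w v z) +
    (-1/4 : ℝ) * (hbianchi2 x w y z v) +
    (1/3 : ℝ) * (hpair x w y z v) +
    (1/4 : ℝ) * (hpair x w v y z) +
    (1/4 : ℝ) * (hanti y v x w z) +
    (1/6 : ℝ) * (hpair x w y v z) +
    (-1/6 : ℝ) * (hanti x w y v z) +
    (1/6 : ℝ) * (hanti x w z v y) +
    (-1/6 : ℝ) * (hanti y w z v x) +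
    (-1/12 : ℝ) * (hM x z y w v) +
    (1/6 : ℝ) * (hanti z w x y v) +
    (1/6 : ℝ) * (hpair x y z w v) +
    (1/12 : ℝ) * (hpair x w v z y) +
    (1/4 : ℝ) * (hbianchi2 x z y w v) +
    (-1/4 : ℝ) * (hpair x z v y w) +
    (-1/4 : ℝ) * (hanti y v x z w) +
    (-1/6 : ℝ) * (hpair x z y v w) +
    (1/6 : ℝ) * (hanti x z y v w) +
    (1/6 : ℝ) * (hpair x y w z v) +
    (-1/6 : ℝ) * (hpair x v y z w) +
    (-1/6 : ℝ) * (hbianchi1 x y z v w) +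
    (1/6 : ℝ) * (hanti z v x y w) +
    (1/6 : ℝ) * (hpair x y z v w) +
    (-1/6 : ℝ) * (hbianchi1 x z w v y) +
    (1/12 : ℝ) * (hanti z w x v y) +
    (1/12 : ℝ) * (hpair x v w z y) +
    (-1/12 : ℝ) * (hanti w v x z y) +
    (-1/12 : ℝ) * (hpair x z w v y) +
    (-1/12 : ℝ) * (hpair x z v w y) +
    (1/6 : ℝ) * (hpair x y v z w) +
    (-1/4 : ℝ) * (hbianchi2 y z x w v) +
    (1/4 : ℝ) * (hpair y z v x w) +
    (1/4 : ℝ) * (hanti x v y z w) +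
    (1/12 : ℝ) * (hanti w v y z x) +
    (1/12 : ℝ) * (hpair y z w v x) +
    (1/12 : ℝ) * (hpair y z v w x) +
    (1/12 : ℝ) * (hanti z v x w y) +
    (1/12 : ℝ) * (hpair x w z v y) +
    (1/12 : ℝ) * (hM y z x w v) +
    (-1/12 : ℝ) * (hpair y w v z x) +
    (-1/12 : ℝ) * (hanti x y w z v) +
    (-1/12 : ℝ) * (hanti x y v z w) +
    (1/6 : ℝ) * (hbianchi1 y z w v x) +
    (-1/12 : ℝ) * (hanti z w y v x) +
    (-1/12 : ℝ) * (hpair y v w z x) +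
    (-1/12 : ℝ) * (hanti z v y w x) +
    (-1/12 : ℝ) * (hpair y w z v x) +
    (2/3 : ℝ) * (hbianchi1 x y z w v) +
    (-2/3 : ℝ) * (hanti x z y w v) +
    (1/12 : ℝ) * (hM x w y z v) +
    (-1/6 : ℝ) * (hanti w v x y z) +
    (-1/6 : ℝ) * (hpair x y w v z) +
    (-1/12 : ℝ) * (hpair x v z w y) +
    (-1/6 : ℝ) * (hpair x y v w z) +
    (-1/12 : ℝ) * (hM y w x z v) +
    (1/12 : ℝ) * (hanti x y z w v) +
    (1/12 : ℝ) * (hpair y v z w x) +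
    (1/12 : ℝ) * (hanti x y v w z)
end

section
/- Let f : V → End(V) be a function assigning to each x ∈ V a self-adjoint linear map f(x), such that f is additive/linear in x and f(x)x = 0 for all x ∈ V. Then f(x) = 0 for all x. -/
/-!
The trilinear form `T x y z = B (f x y) z` is antisymmetric in its first two arguments (polarize
`f x x = 0`) and symmetric in its last two (self-adjointness and symmetry of `B`). Such a form
vanishes, and non-degeneracy of `B` then forces `f = 0`.
-/

/-- Applying the two symmetries alternately six times brings `T x y z` back to itself with a
sign `-1`. -/
theorem eq_zero_of_antisymm_of_symm {α G : Type*} [AddGroup G] [IsAddTorsionFree G]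
    {T : α → α → α → G} (hanti : ∀ x y z, T y x z = -T x y z)
    (hsymm : ∀ x y z, T x z y = T x y z) (x y z : α) : T x y z = 0 :=
  self_eq_neg.mp <| calc
    T x y z = -T y x z := hanti y x z
    _ = -T y z x := by rw [hsymm y z x]
    _ = T z y x := by rw [hanti z y x, neg_neg]
    _ = T z x y := hsymm z x y
    _ = -T x z y := hanti x z y
    _ = -T x y z := by rw [hsymm x y z]

theorem LinearMap.BilinForm.apply_eq_zero_of_isAlt_of_selfAdjoint {R M : Type*} [CommRing R]
    [IsAddTorsionFree R] [AddCommGroup M] [Module R M] {B : LinearMap.BilinForm R M}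
    (hsymm : ∀ x y, B x y = B y x) {f : M →ₗ[R] Module.End R M} (halt : f.IsAlt)
    (hsa : ∀ x y z, B (f x y) z = B y (f x z)) (x y z : M) : B (f x y) z = 0 :=
  eq_zero_of_antisymm_of_symm (T := fun x y z => B (f x y) z)
    (fun x y z => by rw [← halt.neg, map_neg, LinearMap.neg_apply])
    (fun x y z => by rw [hsa, hsymm]) x y z

theorem stmt12_general {V : Type*} [AddCommGroup V] [Module ℝ V]
    (B : LinearMap.BilinForm ℝ V) (hsymm : ∀ x y, B x y = B y x)
    (hnd : B.Nondegenerate)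
    -- f is linear in x, each f(x) is self-adjoint, and f(x)x = 0
    (f : V →ₗ[ℝ] Module.End ℝ V)
    (hsa : ∀ x y z, B (f x y) z = B y (f x z))
    (hxx : ∀ x, f x x = 0) :
    ∀ x, f x = 0 := by
  intro x
  ext y
  exact hnd.1 _ (B.apply_eq_zero_of_isAlt_of_selfAdjoint hsymm hxx hsa x y)

theorem stmt12 {V : Type*} [AddCommGroup V] [Module ℝ V] [FiniteDimensional ℝ V]
    (B : LinearMap.BilinForm ℝ V) (hsymm : ∀ x y, B x y = B y x)
    (hnd : B.Nondegenerate)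
    -- f is linear in x, each f(x) is self-adjoint, and f(x)x = 0
    (f : V →ₗ[ℝ] Module.End ℝ V)
    (hsa : ∀ x y z, B (f x y) z = B y (f x z))
    (hxx : ∀ x, f x x = 0) :
    ∀ x, f x = 0 :=
  stmt12_general B hsymm hnd f hsa hxx
end

section
/- Let 𝔖 : V → End(V) be given in coordinates by cubic homogeneous polynomials in x, with each 𝔖(x) self-adjoint, 𝔖(x)x = 0, and suppose 𝔖(x) = 0 whenever (x,x) = 0, where dim V ≥ 3 and the form is indefinite of signature (p,q) with p,q ≥ 1. Then 𝔖(x) = 0 for all x ∈ V. -/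
/-!
Split off a positive coordinate, `Q = s² + c(y)`. Dividing an entry of `𝔖` by the monic `s² + c`
leaves a remainder `a(y) s + b(y)` that vanishes at both roots `s = ±√(-c(y))` wherever `c(y) < 0`;
since `p ≥ 1` that region is Zariski dense, so `Q` divides every entry and, by homogeneity,
`𝔖(x) = Q(x) f(x)` with `f` linear. Cancelling `Q`, each `f(x)` is self-adjoint with `f(x) x = 0`,
so `T(x, y, z) = (f(x) y, z)` is symmetric in `y, z` and, by polarization, antisymmetric in `x, y`.
Such a form vanishes, hence `f = 0`.
-/

open MvPolynomial Filter

section Polarization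

variable {K V : Type*} [Field K] [NeZero (2 : K)] [AddCommGroup V] [Module K V]

theorem LinearMap.BilinForm.eq_zero_of_isSelfAdjoint_of_apply_self {B : LinearMap.BilinForm K V}
    (hsymm : B.IsSymm) (hsep : B.SeparatingLeft) (f : V →+ Module.End K V)
    (hadj : ∀ x, B.IsSelfAdjoint (f x)) (hself : ∀ x, f x x = 0) : f = 0 := by
  have hswap : ∀ x y z, B (f x y) z = B (f x z) y := fun x y z =>
    (hadj x y z).trans (hsymm.eq _ _)
  have hanti : ∀ x y z, B (f x y) z = -B (f y x) z := by
    intro x y z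
    have h := hself (x + y)
    simp only [map_add, LinearMap.add_apply, hself, zero_add, add_zero] at h
    rw [eq_neg_iff_add_eq_zero, ← LinearMap.add_apply, ← map_add, add_comm, h, map_zero,
      LinearMap.zero_apply]
  ext x y
  refine hsep _ fun z => ?_
  -- `T(x,y,z) = T(x,z,y) = -T(z,x,y) = -T(z,y,x) = T(y,z,x) = T(y,x,z) = -T(x,y,z)`
  have h2 : (2 : K) * B (f x y) z = 0 := by
    linear_combination hswap x y z + hanti x z y - hswap z x y - hanti z y x + hswap y z x
      + hanti y x z
  simpa [two_ne_zero] using h2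

end Polarization

section DiagonalForm

variable {ι : Type*} [Fintype ι] [DecidableEq ι]

theorem Matrix.isSelfAdjoint_toLinearMap₂'_diagonal_iff {R : Type*} [CommRing R] (ε : ι → R)
    (A : Matrix ι ι R) :
    (toLinearMap₂' R (diagonal ε)).IsSelfAdjoint (toLin' A) ↔
      ∀ i j, ε i * A i j = ε j * A j i := by
  rw [LinearMap.IsSelfAdjoint, isAdjointPair_toLinearMap₂', Matrix.IsAdjointPair, ← Matrix.ext_iff]
  simp only [mul_diagonal, diagonal_mul, transpose_apply]
  exact forall_comm.trans (forall₂_congr fun i j => by rw [mul_comm _ (ε i), eq_comm])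

theorem Matrix.eq_zero_of_isSelfAdjoint_of_mulVec_self_of_map_add {K : Type*} [Field K]
    [NeZero (2 : K)] {ε : ι → K} (hε : ∀ i, ε i ≠ 0) {M : (ι → K) → Matrix ι ι K}
    (hM : ∀ x y, M (x + y) = M x + M y) (hadj : ∀ x i j, ε i * M x i j = ε j * M x j i)
    (hself : ∀ x, (M x).mulVec x = 0) (x : ι → K) : M x = 0 := by
  have hsymm : (toBilin' (diagonal ε)).IsSymm :=
    isSymm_toBilin'_iff_isSymm.mpr (isSymm_diagonal ε)
  have hsep : (toLinearMap₂' K (diagonal ε)).SeparatingLeft :=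
    LinearMap.separatingLeft_toLinearMap₂'_of_det_ne_zero'
      (by simpa [det_diagonal, Finset.prod_ne_zero_iff] using hε)
  have h := LinearMap.BilinForm.eq_zero_of_isSelfAdjoint_of_apply_self
    (B := toBilin' (diagonal ε)) hsymm hsep
    ((toLin' : Matrix ι ι K ≃ₗ[K] _).toLinearMap.toAddMonoidHom.comp (AddMonoidHom.mk' M hM))
    (fun x => (isSelfAdjoint_toLinearMap₂'_diagonal_iff ε (M x)).mpr (hadj x))
    (fun x => by simpa using hself x)
  exact toLin'.injective (by simpa using DFunLike.congr_fun h x)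

end DiagonalForm

namespace MvPolynomial

variable {σ R : Type*}

theorem IsHomogeneous.eval_add [CommSemiring R] {φ : MvPolynomial σ R} (hφ : φ.IsHomogeneous 1)
    (x y : σ → R) : eval (x + y) φ = eval x φ + eval y φ := by
  have hφ' : φ ∈ Submodule.span R (Set.range X) := by
    rw [← homogeneousSubmodule_one_eq_span_X]; exact hφ
  clear hφ
  induction hφ' using Submodule.span_induction with
  | mem _ h => obtain ⟨i, rfl⟩ := h; simp
  | zero => simp
  | add _ _ _ _ h₁ h₂ => simp only [map_add, h₁, h₂]; ring
  | smul _ _ _ h => simp only [smul_eval, h]; ring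

theorem IsHomogeneous.homogeneousComponent_mul [CommSemiring R] {φ : MvPolynomial σ R} {m : ℕ}
    (hφ : φ.IsHomogeneous m) (ψ : MvPolynomial σ R) (n : ℕ) :
    homogeneousComponent (m + n) (φ * ψ) = φ * homogeneousComponent n ψ := by
  conv_lhs => rw [← sum_homogeneousComponent ψ, Finset.mul_sum, map_sum]
  have hcomp : ∀ i, homogeneousComponent (m + n) (φ * homogeneousComponent i ψ) =
      if i = n then φ * homogeneousComponent n ψ else 0 := by
    intro i
    rw [homogeneousComponent_of_mem (hφ.mul (homogeneousComponent_isHomogeneous i ψ))]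
    rcases eq_or_ne i n with rfl | h
    · simp
    · simp [h, h.symm]
  simp only [hcomp, Finset.sum_ite_eq', Finset.mem_range]
  split_ifs with h
  · rfl
  · rw [homogeneousComponent_eq_zero _ _ (by omega), mul_zero]

theorem eq_zero_of_eval_mul_eq_zero [CommRing R] [IsDomain R] [Infinite R]
    {φ ψ : MvPolynomial σ R} (hφ : φ ≠ 0) (h : ∀ x, eval x (φ * ψ) = 0) : ψ = 0 :=
  (mul_eq_zero.mp (funext fun x => by simpa using h x)).resolve_left hφ

theorem eval_aeval_C_add_C_mul_X [CommRing R] (g : MvPolynomial σ R) (y δ : σ → R) (t : R) :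
    (aeval (fun k => Polynomial.C (y k) + Polynomial.C (δ k) * Polynomial.X) g).eval t =
      eval (y + t • δ) g := by
  induction g using MvPolynomial.induction_on with
  | C a => simp
  | add f g hf hg => simp [hf, hg]
  | mul_X f k hf =>
    simp only [map_mul, aeval_X, Polynomial.eval_mul, hf, Polynomial.eval_add, Polynomial.eval_C,
      Polynomial.eval_X, eval_X, Pi.add_apply, Pi.smul_apply, smul_eq_mul]
    ring

theorem eval_eq_zero_of_eventually_eval_add_smul_eq_zero (g : MvPolynomial σ ℝ) (y δ : σ → ℝ)
    (h : ∀ᶠ t : ℝ in atTop, eval (y + t • δ) g = 0) : eval y g = 0 := by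
  obtain ⟨T, hT⟩ := h.exists_forall_of_atTop
  have hline : aeval (fun k => Polynomial.C (y k) + Polynomial.C (δ k) * Polynomial.X) g = 0 :=
    Polynomial.eq_zero_of_infinite_isRoot _ <| (Set.Ici_infinite T).mono fun t ht => by
      simpa [Polynomial.IsRoot, eval_aeval_C_add_C_mul_X] using hT t ht
  simpa [hline] using (eval_aeval_C_add_C_mul_X g y δ 0).symm

theorem optionEquivLeft_rename_some [CommSemiring R] (c : MvPolynomial σ R) :
    optionEquivLeft R σ (rename some c) = Polynomial.C c := by
  induction c using MvPolynomial.induction_on with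
  | C a => simp [optionEquivLeft_C]
  | add f g hf hg => simp [hf, hg]
  | mul_X f k hf => simp [hf, optionEquivLeft_X_some]

end MvPolynomial

theorem Polynomial.X_sq_add_C_dvd_of_eval_eq_zero {σ : Type*} (c : MvPolynomial σ ℝ)
    (hc : ∀ g : MvPolynomial σ ℝ,
      (∀ y, MvPolynomial.eval y c < 0 → MvPolynomial.eval y g = 0) → g = 0)
    (F : Polynomial (MvPolynomial σ ℝ))
    (hF : ∀ y s, s ^ 2 + MvPolynomial.eval y c = 0 → (F.map (MvPolynomial.eval y)).eval s = 0) :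
    X ^ 2 + C c ∣ F := by
  have hmonic : (X ^ 2 + C c).Monic := monic_X_pow_add_C c two_ne_zero
  rw [← modByMonic_eq_zero_iff_dvd hmonic]
  set r := F %ₘ (X ^ 2 + C c) with hr
  have hdeg : r.natDegree < 2 := by
    simpa using natDegree_modByMonic_lt F hmonic (X_pow_add_C_ne_one two_pos c)
  have hroot : ∀ y s, s ^ 2 + MvPolynomial.eval y c = 0 →
      (r.map (MvPolynomial.eval y)).eval s = 0 := by
    intro y s hs
    have h := hF y s hs
    rw [← modByMonic_add_div F (X ^ 2 + C c), ← hr] at h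
    simpa [hs] using h
  have hmap : ∀ y, MvPolynomial.eval y c < 0 → r.map (MvPolynomial.eval y) = 0 := by
    intro y hy
    set s := √(-MvPolynomial.eval y c)
    have hs : s ^ 2 + MvPolynomial.eval y c = 0 := by rw [Real.sq_sqrt (by linarith)]; ring
    have hs₀ : 0 < s := Real.sqrt_pos.mpr (by linarith)
    refine eq_zero_of_natDegree_lt_card_of_eval_eq_zero' _ {s, -s} ?_ ?_
    · simp only [Finset.mem_insert, Finset.mem_singleton, forall_eq_or_imp, forall_eq]
      exact ⟨hroot y s hs, hroot y (-s) (by rwa [neg_sq])⟩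
    · rw [Finset.card_pair (by linarith)]
      exact natDegree_map_le.trans_lt hdeg
  refine Polynomial.ext fun n => ?_
  rw [coeff_zero]
  exact hc _ fun y hy => by simpa using congr_arg (coeff · n) (hmap y hy)

theorem MvPolynomial.X_none_sq_add_rename_dvd_of_eval_eq_zero {σ : Type*}
    (c : MvPolynomial σ ℝ) (hc : ∀ g : MvPolynomial σ ℝ, (∀ y, eval y c < 0 → eval y g = 0) → g = 0)
    (F : MvPolynomial (Option σ) ℝ)
    (hF : ∀ x : Option σ → ℝ, x none ^ 2 + eval (x ∘ some) c = 0 → eval x F = 0) :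
    X none ^ 2 + rename some c ∣ F := by
  rw [← map_dvd_iff (optionEquivLeft ℝ σ), map_add, map_pow, optionEquivLeft_X_none,
    optionEquivLeft_rename_some]
  refine Polynomial.X_sq_add_C_dvd_of_eval_eq_zero c hc _ fun y s hs => ?_
  rw [← optionEquivLeft_elim_eval]
  exact hF _ hs

theorem MvPolynomial.eq_zero_of_isSelfAdjoint_of_mulVec_self_of_eq_eval_mul {ι K : Type*} [Fintype ι]
    [DecidableEq ι] [Field K] [Infinite K] [NeZero (2 : K)] {φ : MvPolynomial ι K} (hφ : φ ≠ 0)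
    {L : Matrix ι ι (MvPolynomial ι K)} (hL : ∀ i j, (L i j).IsHomogeneous 1) {ε : ι → K}
    (hε : ∀ i, ε i ≠ 0) {S : (ι → K) → Matrix ι ι K} (hS : ∀ x i j, S x i j = eval x (φ * L i j))
    (hadj : ∀ x i j, ε i * S x i j = ε j * S x j i) (hself : ∀ x, (S x).mulVec x = 0) (x : ι → K) :
    S x = 0 := by
  have hcancel : ∀ G, (∀ x, eval x (φ * G) = 0) → ∀ x, eval x G = 0 := fun G h x => by
    rw [eq_zero_of_eval_mul_eq_zero hφ h, map_zero]
  have hMadj : ∀ x i j, ε i * eval x (L i j) = ε j * eval x (L j i) := fun x i j => by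
    have h := hcancel (C (ε i) * L i j - C (ε j) * L j i) (fun y => by
      simpa [mul_sub, mul_left_comm, hS] using sub_eq_zero.mpr (hadj y i j)) x
    simpa [sub_eq_zero] using h
  have hMself : ∀ x, (Matrix.of fun i j => eval x (L i j)).mulVec x = 0 := fun x => by
    ext j
    have h := hcancel (∑ k, L j k * X k) (fun y => by
      have hy := congrFun (hself y) j
      simp only [Matrix.mulVec, dotProduct, hS, map_mul, Pi.zero_apply] at hy
      simpa only [map_mul, map_sum, eval_X, Finset.mul_sum, mul_assoc] using hy) x
    simpa [Matrix.mulVec, dotProduct] using h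
  have hM := Matrix.eq_zero_of_isSelfAdjoint_of_mulVec_self_of_map_add hε
    (fun x y => Matrix.ext fun i j => (hL i j).eval_add x y) hMadj hMself x
  ext i j
  simpa [hS] using Or.inr (congrFun₂ hM i j)

noncomputable def signatureForm (p q : ℕ) : MvPolynomial (Fin p ⊕ Fin q) ℝ :=
  ∑ i, X (Sum.inr i) ^ 2 - ∑ j, X (Sum.inl j) ^ 2

@[simps]
def finSumFinSuccEquiv (p q : ℕ) : Fin p ⊕ Fin (q + 1) ≃ Option (Fin p ⊕ Fin q) where
  toFun := Sum.elim (some ∘ Sum.inl) (Fin.cases none (some ∘ Sum.inr))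
  invFun o := o.elim (Sum.inr 0) (Sum.elim Sum.inl (Sum.inr ∘ Fin.succ))
  left_inv := by
    rintro (j | i)
    · rfl
    · cases i using Fin.cases <;> rfl
  right_inv := by rintro (_ | j | i) <;> rfl

section SignatureForm

variable {p q : ℕ}

@[simp]
theorem eval_signatureForm (x : Fin p ⊕ Fin q → ℝ) :
    eval x (signatureForm p q) = ∑ i, x (Sum.inr i) ^ 2 - ∑ j, x (Sum.inl j) ^ 2 := by
  simp [signatureForm]

theorem signatureForm_isHomogeneous : (signatureForm p q).IsHomogeneous 2 :=
  .sub (.sum _ _ _ fun _ _ => isHomogeneous_X_pow _ _) (.sum _ _ _ fun _ _ => isHomogeneous_X_pow _ _)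

theorem signatureForm_ne_zero (hq : 0 < q) : signatureForm p q ≠ 0 := fun h =>
  hq.ne' (by simpa [Fin.sum_univ_succ] using congr_arg (eval (Sum.elim 0 1)) h)

theorem rename_finSumFinSuccEquiv_signatureForm :
    rename (finSumFinSuccEquiv p q) (signatureForm p (q + 1)) =
      X none ^ 2 + rename some (signatureForm p q) :=
  funext fun x => by
    simp only [eval_rename, eval_signatureForm, Function.comp_apply, finSumFinSuccEquiv_apply,
      Sum.elim_inr, Fin.sum_univ_succ, Fin.cases_zero, Fin.cases_succ, Sum.elim_inl, map_add,
      map_pow, eval_X]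
    ring

theorem eq_zero_of_forall_eval_signatureForm_neg (hp : 0 < p) {g : MvPolynomial (Fin p ⊕ Fin q) ℝ}
    (h : ∀ y, eval y (signatureForm p q) < 0 → eval y g = 0) : g = 0 := by
  refine funext fun y => ?_
  rw [map_zero]
  let j₀ : Fin p ⊕ Fin q := Sum.inl ⟨0, hp⟩
  refine eval_eq_zero_of_eventually_eval_add_smul_eq_zero g y (Pi.single j₀ 1) ?_
  filter_upwards [eventually_gt_atTop (|eval y (signatureForm p q)| + 2 * |y j₀|),
    eventually_ge_atTop 1] with t ht ht₁
  refine h _ ?_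
  have hline : eval (y + t • Pi.single j₀ 1) (signatureForm p q) =
      eval y (signatureForm p q) - 2 * t * y j₀ - t ^ 2 := by
    simp only [eval_signatureForm, Pi.add_apply, Pi.smul_apply, Pi.single_apply, smul_eq_mul,
      mul_ite, mul_one, mul_zero, add_zero, reduceCtorEq, Sum.inl.injEq, if_false, add_sq, ite_pow,
      OfNat.ofNat_ne_zero, zero_pow, ne_eq, not_false_eq_true, Finset.sum_add_distrib,
      Finset.sum_ite_eq', Finset.mem_univ, if_true, j₀]
    ring
  rw [hline]
  have ht₀ : 0 ≤ t := by linarith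
  nlinarith [le_abs_self (eval y (signatureForm p q)),
    mul_le_mul_of_nonneg_left (neg_abs_le (y j₀)) ht₀,
    mul_nonneg (sub_nonneg.2 ht₁) (abs_nonneg (eval y (signatureForm p q))),
    mul_lt_mul_of_pos_left ht (by linarith : 0 < t)]

theorem signatureForm_dvd_of_eval_eq_zero (hp : 0 < p) (hq : 0 < q)
    (F : MvPolynomial (Fin p ⊕ Fin q) ℝ)
    (hF : ∀ x, eval x (signatureForm p q) = 0 → eval x F = 0) : signatureForm p q ∣ F := by
  obtain ⟨q, rfl⟩ := Nat.exists_eq_add_one_of_ne_zero hq.ne'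
  rw [← map_dvd_iff (renameEquiv ℝ (finSumFinSuccEquiv p q)), renameEquiv_apply,
    renameEquiv_apply, rename_finSumFinSuccEquiv_signatureForm]
  refine X_none_sq_add_rename_dvd_of_eval_eq_zero _
    (fun g => eq_zero_of_forall_eval_signatureForm_neg hp) _ fun x hx => ?_
  rw [eval_rename]
  refine hF _ ?_
  rw [← eval_rename, rename_finSumFinSuccEquiv_signatureForm]
  simpa [eval_rename] using hx

theorem exists_isHomogeneous_eq_signatureForm_mul (hp : 0 < p) (hq : 0 < q) {n : ℕ}
    {F : MvPolynomial (Fin p ⊕ Fin q) ℝ} (hF : F.IsHomogeneous (2 + n))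
    (hvan : ∀ x, eval x (signatureForm p q) = 0 → eval x F = 0) :
    ∃ L : MvPolynomial (Fin p ⊕ Fin q) ℝ, L.IsHomogeneous n ∧ F = signatureForm p q * L := by
  obtain ⟨G, rfl⟩ := signatureForm_dvd_of_eval_eq_zero hp hq F hvan
  refine ⟨homogeneousComponent n G, homogeneousComponent_isHomogeneous n G, ?_⟩
  rw [← signatureForm_isHomogeneous.homogeneousComponent_mul, homogeneousComponent_eq_self hF]

end SignatureForm

theorem stmt13_general (p q : ℕ) (hp : 1 ≤ p) (hq : 1 ≤ q)
    -- the quadratic form and bilinear form of signature (p,q)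
    (Q : (Fin p ⊕ Fin q → ℝ) → ℝ)
    (hQ : ∀ v, Q v = ∑ i : Fin q, v (Sum.inr i) ^ 2 - ∑ i : Fin p, v (Sum.inl i) ^ 2)
    (B : (Fin p ⊕ Fin q → ℝ) → (Fin p ⊕ Fin q → ℝ) → ℝ)
    (hB : ∀ v w, B v w = ∑ i : Fin q, v (Sum.inr i) * w (Sum.inr i) -
      ∑ i : Fin p, v (Sum.inl i) * w (Sum.inl i))
    -- 𝔖, given in coordinates by cubic homogeneous polynomials
    (S : (Fin p ⊕ Fin q → ℝ) → Matrix (Fin p ⊕ Fin q) (Fin p ⊕ Fin q) ℝ)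
    (hpoly : ∀ i j, ∃ P : MvPolynomial (Fin p ⊕ Fin q) ℝ, P.IsHomogeneous 3 ∧
      ∀ x, S x i j = MvPolynomial.eval x P)
    -- each 𝔖(x) is self-adjoint and 𝔖(x)x = 0
    (hsa : ∀ x y z, B ((S x).mulVec y) z = B y ((S x).mulVec z))
    (hxx : ∀ x, (S x).mulVec x = 0)
    -- 𝔖 vanishes on the null cone
    (hnull : ∀ x, Q x = 0 → S x = 0) :
    ∀ x, S x = 0 := by
  choose P hPhom hPeval using hpoly
  have hQ' : ∀ x, Q x = eval x (signatureForm p q) := fun x => by rw [hQ, eval_signatureForm]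
  choose L hLhom hPL using fun i j =>
    exists_isHomogeneous_eq_signatureForm_mul (n := 1) hp hq (hPhom i j) fun x hx => by
      rw [← hPeval, hnull x ((hQ' x).trans hx), Matrix.zero_apply]
  let ε : Fin p ⊕ Fin q → ℝ := Sum.elim (-1) 1
  have hBε : ∀ u v, B u v = Matrix.toLinearMap₂' ℝ (Matrix.diagonal ε) u v := fun u v => by
    simp only [hB, Matrix.toLinearMap₂'_apply', dotProduct, Matrix.mulVec_diagonal,
      Fintype.sum_sum_type, Sum.elim_inl, Sum.elim_inr, Pi.neg_apply, Pi.one_apply, neg_mul,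
      one_mul, mul_neg, Finset.sum_neg_distrib, ε]
    ring
  refine eq_zero_of_isSelfAdjoint_of_mulVec_self_of_eq_eval_mul (signatureForm_ne_zero hq) hLhom
    (ε := ε) (by simp [ε]) (fun x i j => by rw [hPeval, hPL]) (fun x => ?_) hxx
  exact (Matrix.isSelfAdjoint_toLinearMap₂'_diagonal_iff ε (S x)).mp fun y z => by
    simpa [hBε] using hsa x y z

theorem stmt13 (p q : ℕ) (hp : 1 ≤ p) (hq : 1 ≤ q) (hdim : 3 ≤ p + q)
    -- the quadratic form and bilinear form of signature (p,q)
    (Q : (Fin p ⊕ Fin q → ℝ) → ℝ)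
    (hQ : ∀ v, Q v = ∑ i : Fin q, v (Sum.inr i) ^ 2 - ∑ i : Fin p, v (Sum.inl i) ^ 2)
    (B : (Fin p ⊕ Fin q → ℝ) → (Fin p ⊕ Fin q → ℝ) → ℝ)
    (hB : ∀ v w, B v w = ∑ i : Fin q, v (Sum.inr i) * w (Sum.inr i) -
      ∑ i : Fin p, v (Sum.inl i) * w (Sum.inl i))
    -- 𝔖, given in coordinates by cubic homogeneous polynomials
    (S : (Fin p ⊕ Fin q → ℝ) → Matrix (Fin p ⊕ Fin q) (Fin p ⊕ Fin q) ℝ)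
    (hpoly : ∀ i j, ∃ P : MvPolynomial (Fin p ⊕ Fin q) ℝ, P.IsHomogeneous 3 ∧
      ∀ x, S x i j = MvPolynomial.eval x P)
    -- each 𝔖(x) is self-adjoint and 𝔖(x)x = 0
    (hsa : ∀ x y z, B ((S x).mulVec y) z = B y ((S x).mulVec z))
    (hxx : ∀ x, (S x).mulVec x = 0)
    -- 𝔖 vanishes on the null cone
    (hnull : ∀ x, Q x = 0 → S x = 0) :
    ∀ x, S x = 0 :=
  stmt13_general p q hp hq Q hQ B hB S hpoly hsa hxx hnull
end

section
/- Let A be self-adjoint on a space of signature (p,q) with all eigenvalues real, such that 0 is a Jordan-simple eigenvalue (A vanishes on the generalized 0-eigenspace) and such that for every nonzero real eigenvalue λ the restriction of the bilinear form to the generalized eigenspace E_λ is definite. Then A is Jordan simple (diagonalizable over ℝ). -/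
/-- The complex spectrum of a real linear operator: the spectrum of its complexification. -/
noncomputable def specC {V : Type*} [AddCommGroup V] [Module ℝ V]
    (A : Module.End ℝ V) : Set ℂ :=
  spectrum ℂ (LinearMap.baseChange ℂ A)

/-! For `λ ≠ 0` the form is definite, hence anisotropic, on `E_λ`, and `N = A - λ` is
`B`-self-adjoint and preserves `E_λ`. If `N² y = 0` with `y ∈ E_λ`, then
`B (N y) (N y) = B y (N² y) = 0`, so `N y = 0`; descending along `N^n x = 0` gives `N x = 0`. -/

theorem apply_eq_zero_of_pow_apply_eq_zero_of_anisotropicOn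
    {R M : Type*} [CommSemiring R] [AddCommMonoid M] [Module R M]
    {B : LinearMap.BilinForm R M} {N : Module.End R M} (hN : LinearMap.IsAdjointPair B B N N)
    {E : Set M} (hNE : Set.MapsTo N E E) (hE : ∀ y ∈ E, B y y = 0 → y = 0) :
    ∀ (n : ℕ), ∀ x ∈ E, (N ^ n) x = 0 → N x = 0
  | 0, x, _, hx => by rw [pow_zero, Module.End.one_apply] at hx; rw [hx, map_zero]
  | n + 1, x, hxE, hx => by
    have hNxE : N x ∈ E := hNE hxE
    have hNNx : N (N x) = 0 :=
      apply_eq_zero_of_pow_apply_eq_zero_of_anisotropicOn hN hNE hE n (N x) hNxE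
        (by rwa [pow_succ, Module.End.mul_apply] at hx)
    exact hE (N x) hNxE (by rw [hN, hNNx, map_zero])

theorem stmt17_general {V : Type*} [AddCommGroup V] [Module ℝ V]
    (B : LinearMap.BilinForm ℝ V)
    (A : Module.End ℝ V) (hA : ∀ x y, B (A x) y = B x (A y))
    -- 0 is a Jordan-simple eigenvalue: A vanishes on the generalized 0-eigenspace
    (h0 : ∀ x ∈ A.maxGenEigenspace 0, A x = 0)
    -- for every nonzero real eigenvalue λ the form is definite on E_λ
    (hdef : ∀ lam : ℝ, lam ≠ 0 →
      (∀ x ∈ A.maxGenEigenspace lam, x ≠ 0 → 0 < B x x) ∨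
      (∀ x ∈ A.maxGenEigenspace lam, x ≠ 0 → B x x < 0)) :
    -- A is Jordan simple: A - λ·Id vanishes on each generalized eigenspace
    ∀ lam : ℝ, ∀ x ∈ A.maxGenEigenspace lam, A x = lam • x := by
  intro lam x hx
  rcases eq_or_ne lam 0 with rfl | hlam
  · simpa using h0 x hx
  have hN : LinearMap.IsAdjointPair B B ⇑(A - lam • 1) ⇑(A - lam • 1) :=
    LinearMap.IsAdjointPair.sub hA (LinearMap.isAdjointPair_one.smul lam)
  have hNE : Set.MapsTo ⇑(A - lam • 1) (A.maxGenEigenspace lam) (A.maxGenEigenspace lam) :=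
    Module.End.mapsTo_maxGenEigenspace_of_comm ((Commute.refl A).sub_right
      ((Commute.one_right A).smul_right lam)) lam
  have hE : ∀ y ∈ A.maxGenEigenspace lam, B y y = 0 → y = 0 := fun y hy hyy => by
    by_contra hy0
    rcases hdef lam hlam with hpos | hneg
    · exact (hpos y hy hy0).ne' hyy
    · exact (hneg y hy hy0).ne hyy
  obtain ⟨n, hn⟩ := (A.mem_maxGenEigenspace lam x).mp hx
  have hNx := apply_eq_zero_of_pow_apply_eq_zero_of_anisotropicOn hN hNE hE n x hx hn
  rwa [LinearMap.sub_apply, sub_eq_zero] at hNx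

theorem stmt17 {V : Type*} [AddCommGroup V] [Module ℝ V] [FiniteDimensional ℝ V]
    (B : LinearMap.BilinForm ℝ V) (hsymm : ∀ x y, B x y = B y x)
    (hnd : B.Nondegenerate)
    (p q : ℕ) (hsig : HasSignature B p q)
    (A : Module.End ℝ V) (hA : ∀ x y, B (A x) y = B x (A y))
    -- all eigenvalues of A are real
    (hreal : ∀ mu ∈ specC A, mu.im = 0)
    -- 0 is a Jordan-simple eigenvalue: A vanishes on the generalized 0-eigenspace
    (h0 : ∀ x ∈ A.maxGenEigenspace 0, A x = 0)
    -- for every nonzero real eigenvalue λ the form is definite on E_λ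
    (hdef : ∀ lam : ℝ, lam ≠ 0 →
      (∀ x ∈ A.maxGenEigenspace lam, x ≠ 0 → 0 < B x x) ∨
      (∀ x ∈ A.maxGenEigenspace lam, x ≠ 0 → B x x < 0)) :
    -- A is Jordan simple: A - λ·Id vanishes on each generalized eigenspace
    ∀ lam : ℝ, ∀ x ∈ A.maxGenEigenspace lam, A x = lam • x :=
  stmt17_general B A hA h0 hdef
end
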